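/- arXiv:2107.06736 — 2 statements merged into one kernel-verified Lean document; each statement's English description precedes it below -/
import Mathlib

section
/- Let 0 < ε < 1 and γ̂_ε(t) = t³/(2ε) − (3/2)t² + εt on [0,ε]. Then for every t ∈ [0,ε), one has t + (γ̂_ε'(t) + 2)/(2 γ̂_ε''(t)) ≤ t − 1/6. Consequently, the map t ↦ ∂ξ_t/∂t(s) = 2γ̂_ε''(t)(s−t) − γ̂_ε'(t) − 2 is strictly negative whenever t ∈ [0,ε] and s > t − 1/6. -/
/-- Non-intersection estimate for backward characteristics of the
right-curved building block. -/
theorem stmt_6 (ε : ℝ) (hε0 : 0 < ε) (hε1 : ε < 1)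
    (γ' γ'' : ℝ → ℝ)
    (hγ' : ∀ t, γ' t = 3*t^2/(2*ε) - 3*t + ε)
    (hγ'' : ∀ t, γ'' t = 3*t/ε - 3) :
    (∀ t ∈ Set.Ico (0:ℝ) ε, t + (γ' t + 2)/(2*γ'' t) ≤ t - 1/6) ∧
    (∀ t ∈ Set.Icc (0:ℝ) ε, ∀ s : ℝ, t - 1/6 < s →
      2*γ'' t*(s - t) - γ' t - 2 < 0) := by
  have hne : ε ≠ 0 := ne_of_gt hε0
  constructor
  · rintro t ⟨ht0, htε⟩
    have hB : 2 * γ'' t < 0 := by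
      rw [hγ'']
      have : 3 * t / ε < 3 := by
        rw [div_lt_iff₀ hε0]; nlinarith
      linarith
    have h1 : (γ' t + 2) / (2 * γ'' t) ≤ -(1/6) := by
      rw [div_le_iff_of_neg hB, hγ', hγ'']
      have key : (0:ℝ) ≤ (3*t^2/2 + t - 3*t*ε + ε^2 + ε) / ε := by
        apply div_nonneg _ (le_of_lt hε0)
        nlinarith [sq_nonneg (t - ε)]
      have eq1 : (3*t^2/2 + t - 3*t*ε + ε^2 + ε) / ε
          = (3*t^2/(2*ε) - 3*t + ε + 2) - (-(1/6) * (2*(3*t/ε - 3))) := by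
        field_simp; ring
      linarith [eq1 ▸ key]
    linarith
  · rintro t ⟨ht0, htε⟩ s hs
    have e1 : 2*γ'' t*(s - t) - γ' t - 2
        = (6*(t-ε)*(s-t) - 3*t^2/2 + 3*t*ε - ε^2 - 2*ε) / ε := by
      rw [hγ', hγ'']; field_simp; ring
    rw [e1]
    apply div_neg_of_neg_of_pos _ hε0
    nlinarith [mul_nonneg (sub_nonneg.2 htε) (by linarith : (0:ℝ) ≤ s - t + 1/6),
      sq_nonneg (t - ε)]
end

section
/- Let f : ℝ → ℝ be continuously differentiable with f'(x) > 0 for all x in a closed interval [m, M], and let a, b ∈ [m, M]. If (sign(a − c) − sign(b − c))·(f(b) − f(c)) ≥ 0 for every c ∈ [m, M], then a = b. Here sign(x) = 1 for x > 0, −1 for x < 0, and 0 for x = 0. -/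
/-- For a strictly increasing C¹ flux, the boundary entropy inequality
forces the trace to equal the datum. -/
theorem stmt_11 (f : ℝ → ℝ) (m M : ℝ) (hf : ContDiff ℝ 1 f)
    (hf' : ∀ x ∈ Set.Icc m M, 0 < deriv f x)
    (a b : ℝ) (ha : a ∈ Set.Icc m M) (hb : b ∈ Set.Icc m M)
    (h : ∀ c ∈ Set.Icc m M,
      0 ≤ (Real.sign (a - c) - Real.sign (b - c)) * (f b - f c)) :
    a = b := by
  have hmono : StrictMonoOn f (Set.Icc m M) := by
    apply strictMonoOn_of_deriv_pos (convex_Icc m M) (hf.continuous.continuousOn)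
    intro x hx
    rw [interior_Icc] at hx
    exact hf' x (Set.mem_Icc_of_Ioo hx)
  rcases lt_trichotomy a b with hab | hab | hab
  · exfalso
    set c := (a + b) / 2 with hc
    have hac : a < c := by simp [hc]; linarith
    have hcb : c < b := by simp [hc]; linarith
    have hcI : c ∈ Set.Icc m M := ⟨le_trans ha.1 hac.le, le_trans hcb.le hb.2⟩
    have h1 : Real.sign (a - c) = -1 := Real.sign_of_neg (by linarith)
    have h2 : Real.sign (b - c) = 1 := Real.sign_of_pos (by linarith)
    have h3 : f c < f b := hmono hcI hb hcb
    have := h c hcI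
    rw [h1, h2] at this
    nlinarith
  · exact hab
  · exfalso
    set c := (a + b) / 2 with hc
    have hbc : b < c := by simp [hc]; linarith
    have hca : c < a := by simp [hc]; linarith
    have hcI : c ∈ Set.Icc m M := ⟨le_trans hb.1 hbc.le, le_trans hca.le ha.2⟩
    have h1 : Real.sign (a - c) = 1 := Real.sign_of_pos (by linarith)
    have h2 : Real.sign (b - c) = -1 := Real.sign_of_neg (by linarith)
    have h3 : f b < f c := hmono hb hcI hbc
    have := h c hcI
    rw [h1, h2] at this
    nlinarith
end
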